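/- arXiv:2405.10162 — 2 statements merged into one kernel-verified Lean document; each statement's English description precedes it below -/
import Mathlib

section
/- Let S(t₁,t₂,q) = t₁²t₂ + δ t₂^{μ-1} + q_{μ-1} t₂^{μ-2} + ⋯ + q₃ t₂², with δ = ±1 and μ ≥ 4, and define the map f(t,q) = (x,q,u) with x₁ = -∂S/∂t₁, x₂ = -∂S/∂t₂, u = S - t₁ ∂S/∂t₁ - t₂ ∂S/∂t₂. If f(t,q) = (x,q,u) and t₂ ≠ 0, then t₁ = -x₁/(2t₂) and t₂ is a root of multiplicity at least 2 of the polynomial P(T) = δ T^μ + q_{μ-1} T^{μ-1} + ⋯ + q₃ T³ + x₂ T² - u T - x₁²/4. -/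
/-!
Write `S(t₁, s) = t₁² s + R(s)` with `R(s) = δ s^(μ-1) + ∑ q_i s^(i-1)`, so that
`δ T^μ + ∑ q_i T^i = T R(T)`. Substituting the values of `x₁, x₂, u` gives the identity
`P(T) = T (R(T) - R(t₂) - R'(t₂)(T - t₂)) - t₁² (T - t₂)²`,
and both summands vanish to second order at `T = t₂`.
-/

open Finset

lemma hasDerivAt_mul_tangent_remainder_sub_sq {R : ℝ → ℝ} {a : ℝ}
    (hR : DifferentiableAt ℝ R a) (c : ℝ) :
    HasDerivAt (fun T => T * (R T - R a - deriv R a * (T - a)) - c * (T - a) ^ 2) 0 a := by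
  have hlin := (hasDerivAt_id' a).sub_const a
  refine (((hasDerivAt_id' a).fun_mul ((hR.hasDerivAt.sub_const (R a)).fun_sub
    (hlin.const_mul (deriv R a)))).fun_sub ((hlin.fun_pow 2).const_mul c)).congr_deriv ?_
  simp

section GeneratingFamily

variable {S : ℝ → ℝ → ℝ} {R : ℝ → ℝ} {t₁ t₂ x₁ x₂ u : ℝ}

lemma deriv_fst_of_eq_sq_mul_add (hS : ∀ s₁ s₂, S s₁ s₂ = s₁ ^ 2 * s₂ + R s₂) :
    deriv (fun s => S s t₂) t₁ = 2 * t₁ * t₂ := by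
  simp only [hS]
  convert (((hasDerivAt_pow 2 t₁).mul_const t₂).add_const (R t₂)).deriv using 1
  push_cast
  ring

lemma deriv_snd_of_eq_sq_mul_add (hS : ∀ s₁ s₂, S s₁ s₂ = s₁ ^ 2 * s₂ + R s₂)
    (hR : DifferentiableAt ℝ R t₂) :
    deriv (fun s => S t₁ s) t₂ = t₁ ^ 2 + deriv R t₂ := by
  simp only [hS]
  exact (((hasDerivAt_id' t₂).const_mul (t₁ ^ 2)).fun_add hR.hasDerivAt).deriv.trans (by simp)

lemma eq_mul_tangent_remainder_sub_sq (hS : ∀ s₁ s₂, S s₁ s₂ = s₁ ^ 2 * s₂ + R s₂)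
    (hR : DifferentiableAt ℝ R t₂)
    (hx₁ : x₁ = -deriv (fun s => S s t₂) t₁)
    (hx₂ : x₂ = -deriv (fun s => S t₁ s) t₂)
    (hu : u = S t₁ t₂ - t₁ * deriv (fun s => S s t₂) t₁ - t₂ * deriv (fun s => S t₁ s) t₂)
    (T : ℝ) :
    T * R T + x₂ * T ^ 2 - u * T - x₁ ^ 2 / 4 =
      T * (R T - R t₂ - deriv R t₂ * (T - t₂)) - t₁ ^ 2 * (T - t₂) ^ 2 := by
  rw [deriv_fst_of_eq_sq_mul_add hS] at hx₁ hu
  rw [deriv_snd_of_eq_sq_mul_add hS hR] at hx₂ hu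
  rw [hx₁, hx₂, hu, hS]
  ring

end GeneratingFamily

theorem stmt0_general (μ : ℕ) (hμ : 4 ≤ μ) (δ : ℝ)
    (q : ℕ → ℝ) (t₁ t₂ x₁ x₂ u : ℝ)
    (S : ℝ → ℝ → ℝ)
    (hS : ∀ s₁ s₂ : ℝ, S s₁ s₂ =
      s₁ ^ 2 * s₂ + δ * s₂ ^ (μ - 1) + ∑ i ∈ Finset.Icc 3 (μ - 1), q i * s₂ ^ (i - 1))
    (P : ℝ → ℝ)
    (hP : ∀ T : ℝ, P T =
      δ * T ^ μ + ∑ i ∈ Finset.Icc 3 (μ - 1), q i * T ^ i + x₂ * T ^ 2 - u * T - x₁ ^ 2 / 4)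
    (hx₁ : x₁ = -deriv (fun s => S s t₂) t₁)
    (hx₂ : x₂ = -deriv (fun s => S t₁ s) t₂)
    (hu : u = S t₁ t₂ - t₁ * deriv (fun s => S s t₂) t₁ - t₂ * deriv (fun s => S t₁ s) t₂)
    (ht₂ : t₂ ≠ 0) :
    t₁ = -x₁ / (2 * t₂) ∧ P t₂ = 0 ∧ deriv P t₂ = 0 := by
  set R : ℝ → ℝ := fun s => δ * s ^ (μ - 1) + ∑ i ∈ Icc 3 (μ - 1), q i * s ^ (i - 1)
  have hSR : ∀ s₁ s₂, S s₁ s₂ = s₁ ^ 2 * s₂ + R s₂ := fun s₁ s₂ => by rw [hS, add_assoc]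
  have hR : DifferentiableAt ℝ R t₂ := by fun_prop
  have hPR : P = fun T => T * (R T - R t₂ - deriv R t₂ * (T - t₂)) - t₁ ^ 2 * (T - t₂) ^ 2 := by
    funext T
    rw [hP, ← eq_mul_tangent_remainder_sub_sq hSR hR hx₁ hx₂ hu T, mul_add, mul_sum,
      mul_left_comm, mul_pow_sub_one (by omega)]
    congr 4
    refine sum_congr rfl fun i hi => ?_
    rw [mul_left_comm, mul_pow_sub_one (by grind)]
  refine ⟨?_, by simp [hPR], by rw [hPR, (hasDerivAt_mul_tangent_remainder_sub_sq hR _).deriv]⟩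
  rw [hx₁, deriv_fst_of_eq_sq_mul_add hSR]
  field_simp

/-- Lemma 1, case t₂ ≠ 0: for the D_μ^δ generating family
`S = t₁²t₂ + δ t₂^(μ-1) + q_{μ-1} t₂^(μ-2) + ⋯ + q₃ t₂²`,
any preimage with `t₂ ≠ 0` satisfies `t₁ = -x₁/(2t₂)` and `t₂` is a root of
multiplicity at least 2 of `P(T) = δT^μ + q_{μ-1}T^(μ-1) + ⋯ + q₃T³ + x₂T² - uT - x₁²/4`. -/
theorem stmt0 (μ : ℕ) (hμ : 4 ≤ μ) (δ : ℝ) (hδ : δ = 1 ∨ δ = -1)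
    (q : ℕ → ℝ) (t₁ t₂ x₁ x₂ u : ℝ)
    (S : ℝ → ℝ → ℝ)
    (hS : ∀ s₁ s₂ : ℝ, S s₁ s₂ =
      s₁ ^ 2 * s₂ + δ * s₂ ^ (μ - 1) + ∑ i ∈ Finset.Icc 3 (μ - 1), q i * s₂ ^ (i - 1))
    (P : ℝ → ℝ)
    (hP : ∀ T : ℝ, P T =
      δ * T ^ μ + ∑ i ∈ Finset.Icc 3 (μ - 1), q i * T ^ i + x₂ * T ^ 2 - u * T - x₁ ^ 2 / 4)
    (hx₁ : x₁ = -deriv (fun s => S s t₂) t₁)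
    (hx₂ : x₂ = -deriv (fun s => S t₁ s) t₂)
    (hu : u = S t₁ t₂ - t₁ * deriv (fun s => S s t₂) t₁ - t₂ * deriv (fun s => S t₁ s) t₂)
    (ht₂ : t₂ ≠ 0) :
    t₁ = -x₁ / (2 * t₂) ∧ P t₂ = 0 ∧ deriv P t₂ = 0 :=
  stmt0_general μ hμ δ q t₁ t₂ x₁ x₂ u S hS P hP hx₁ hx₂ hu ht₂
end

section
/- For nonnegative integers i₀, m₁, m₂ with i₀+m₁+m₂ ≥ 1, the quantity (i₀+m₁+m₂-1)! / ((1+i₀+m₁)! · j₁! ⋯ j_l!) with j₁+⋯+j_l = m₂ times ⟨i₀,i₁,…,i_k⟩ (with i₁+⋯+i_k = m₁) equals ⟨i₀,…,i_k,j₁,…,j_l⟩ / ((1+i₀+m₁)·(i₀+m₁+m₂)). -/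
open Finset Nat

theorem Nat.multinomial_append_mul {a b : ℕ} (f : Fin a → ℕ) (g : Fin b → ℕ) :
    multinomial univ (Fin.append f g) * ((∑ p, f p)! * ∏ r, (g r)!) =
      multinomial univ f * (∑ p, f p + ∑ r, g r)! := by
  have hprod : ∏ p, (Fin.append f g p)! = (∏ p, (f p)!) * ∏ r, (g r)! := by
    simp [Fin.prod_univ_add]
  have hsum : ∑ p, Fin.append f g p = ∑ p, f p + ∑ r, g r := by
    simp [Fin.sum_univ_add]
  refine Nat.eq_of_mul_eq_mul_left (prod_pos (s := univ) fun p _ ↦ factorial_pos (f p)) ?_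
  calc (∏ p, (f p)!) * (multinomial univ (Fin.append f g) * ((∑ p, f p)! * ∏ r, (g r)!))
      = (∏ p, (Fin.append f g p)!) * multinomial univ (Fin.append f g) * (∑ p, f p)! := by
        rw [hprod]; ring
    _ = (∏ p, (f p)!) * multinomial univ f * (∑ p, f p + ∑ r, g r)! := by
        rw [multinomial_spec, multinomial_spec, hsum]; ring
    _ = (∏ p, (f p)!) * (multinomial univ f * (∑ p, f p + ∑ r, g r)!) := by ring

/-- The factorial identity behind the term `I₂` of Theorem 2: with `m₁ = Σ i_p`,
`m₂ = Σ j_r`, `i₀ + m₁ + m₂ ≥ 1`,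
`(i₀+m₁+m₂-1)!/((1+i₀+m₁)!·j₁!⋯j_l!) · ⟨i₀,i₁,…,i_k⟩
  = ⟨i₀,…,i_k,j₁,…,j_l⟩ / ((1+i₀+m₁)·(i₀+m₁+m₂))`. -/
theorem stmt13 (k l i₀ : ℕ) (i : Fin k → ℕ) (j : Fin l → ℕ)
    (h : 1 ≤ i₀ + ∑ p, i p + ∑ r, j r) :
    ((i₀ + ∑ p, i p + ∑ r, j r - 1).factorial : ℚ) /
        (((1 + i₀ + ∑ p, i p).factorial : ℚ) * ∏ r, ((j r).factorial : ℚ)) *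
      (Nat.multinomial Finset.univ (Fin.cons i₀ i : Fin (k + 1) → ℕ) : ℚ)
    = (Nat.multinomial Finset.univ (Fin.append (Fin.cons i₀ i) j : Fin (k + 1 + l) → ℕ) : ℚ) /
        (((1 + i₀ + ∑ p, i p : ℕ) : ℚ) * ((i₀ + ∑ p, i p + ∑ r, j r : ℕ) : ℚ)) := by
  have happend := multinomial_append_mul (Fin.cons i₀ i : Fin (k + 1) → ℕ) j
  rw [Fin.sum_cons] at happend
  have happend_cast : (multinomial univ (Fin.append (Fin.cons i₀ i) j) : ℚ) *
      ((i₀ + ∑ p, i p)! * ∏ r, ((j r)! : ℚ)) =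
        multinomial univ (Fin.cons i₀ i) * (i₀ + ∑ p, i p + ∑ r, j r)! := by
    exact_mod_cast happend
  have hS : ((1 + i₀ + ∑ p, i p)! : ℚ) = (1 + i₀ + ∑ p, i p : ℕ) * (i₀ + ∑ p, i p)! := by
    rw [add_assoc, add_comm 1, factorial_succ, cast_mul]
  have hN : ((i₀ + ∑ p, i p + ∑ r, j r)! : ℚ) =
      (i₀ + ∑ p, i p + ∑ r, j r : ℕ) * (i₀ + ∑ p, i p + ∑ r, j r - 1)! := by
    rw [← cast_mul, mul_factorial_pred (by omega)]
  rw [hS]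
  rw [hN] at happend_cast
  field_simp
  linear_combination -happend_cast
end
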